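/- arXiv:math/0401149 — 2 statements merged into one kernel-verified Lean document; each statement's English description precedes it below -/
import Mathlib

section
/- Let K be a compact subset of ℝ (d = 1) supporting a non-atomic finite measure μ that is absolutely α-decaying (doubling not assumed). If ψ : ℝ⁺ → ℝ⁺ is decreasing and ∑_{r=1}^∞ r^{2α − 1} ψ(r)^α < ∞, then μ(K ∩ W(ψ)) = 0, where W(ψ) = {x ∈ ℝ : |x − p/q| ≤ ψ(q) for infinitely many rationals p/q}. -/
open MeasureTheory Metric Set

noncomputable section

/-- The set of psi-well approximable real numbers (d = 1). -/
def WellApprox1 (ψ : ℝ → ℝ) : Set ℝ :=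
  {x | {pq : ℤ × ℕ | 0 < pq.2 ∧
      |x - (pq.1 : ℝ) / (pq.2 : ℝ)| ≤ ψ (pq.2 : ℝ)}.Infinite}

/-- In dimension one a hyperplane is a point, so absolutely α-decaying reads:
μ(B(x,r) ∩ B(a,ε)) ≤ C (ε/r)^α μ(B(x,r)). -/
def IsAbsolutelyDecaying1 (K : Set ℝ) (μ : Measure ℝ) (C α r₀ : ℝ) : Prop :=
  ∀ a : ℝ, ∀ ε : ℝ, 0 < ε → ∀ x ∈ K, ∀ r : ℝ, 0 < r → r < r₀ →
    μ (ball x r ∩ ball a ε) ≤ ENNReal.ofReal (C * (ε / r) ^ α) * μ (ball x r)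

/-!
Sort the approximating fractions into dyadic blocks `2 ^ t ≤ q < 2 ^ (t + 1)`. Two distinct
fractions of one block are more than `1 / (4 P ^ 2)` apart, `P = 2 ^ t`, so once `P ^ 2 ψ(P)` is
small, the points of the `t`-th block near any `y` lie within `ψ(P)` of a single fraction. At
scale `1 / (8 P ^ 2)` absolute decay then bounds the measure of the block by a multiple of
`(P ^ 2 ψ(P)) ^ α`. Cauchy condensation turns the hypothesis into the summability of
these bounds, and Borel–Cantelli concludes.
-/

open Filter
open scoped ENNReal Topology

theorem summable_condensed_of_le {f g : ℕ → ℝ} (hf : Summable f) (hf₀ : 0 ≤ f) (hg₀ : 0 ≤ g)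
    (hgf : ∀ k n, 2 ^ k ≤ n → n < 2 ^ (k + 1) → g k ≤ f n) :
    Summable fun k => 2 ^ k * g k := by
  have block (k : ℕ) : 2 ^ k * g k ≤ ∑ n ∈ Finset.Ico (2 ^ k) (2 ^ (k + 1)), f n := by
    have hcard : (Finset.Ico (2 ^ k) (2 ^ (k + 1))).card = 2 ^ k := by
      rw [Nat.card_Ico, pow_succ]; omega
    simpa [hcard] using Finset.card_nsmul_le_sum _ f (g k)
      fun n hn => hgf k n (Finset.mem_Ico.1 hn).1 (Finset.mem_Ico.1 hn).2
  refine summable_of_sum_range_le (c := ∑' n, f n) (fun k => mul_nonneg (by positivity) (hg₀ k))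
    fun N => ?_
  calc ∑ k ∈ Finset.range N, 2 ^ k * g k
      ≤ ∑ n ∈ Finset.Ico 1 (2 ^ N), f n := by
        induction N with
        | zero => simp
        | succ N ih =>
          rw [Finset.sum_range_succ, ← Finset.sum_Ico_consecutive f N.one_le_two_pow
            (Nat.pow_le_pow_right two_pos N.le_succ)]
          exact add_le_add ih (block N)
    _ ≤ ∑' n, f n := hf.sum_le_tsum _ fun n _ => hf₀ n

theorem two_rpow_neg_abs_mul_rpow_le {x y : ℝ} (hx : 0 < x) (hxy : x ≤ y) (hyx : y ≤ 2 * x)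
    (β : ℝ) : 2 ^ (-|β|) * y ^ β ≤ x ^ β := by
  rcases le_total 0 β with hβ | hβ
  · calc 2 ^ (-|β|) * y ^ β = (y / 2) ^ β := by
          rw [abs_of_nonneg hβ, Real.rpow_neg zero_le_two,
            Real.div_rpow (hx.le.trans hxy) zero_le_two, inv_mul_eq_div]
      _ ≤ x ^ β := Real.rpow_le_rpow (by linarith) (by linarith) hβ
  · calc 2 ^ (-|β|) * y ^ β ≤ 1 * y ^ β := by
          gcongr
          · exact Real.rpow_nonneg (hx.le.trans hxy) β
          exact Real.rpow_le_one_of_one_le_of_nonpos one_le_two (neg_nonpos.2 (abs_nonneg β))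
      _ ≤ x ^ β := by rw [one_mul]; exact Real.rpow_le_rpow_of_nonpos hx hxy hβ

theorem summable_condensed_rpow_mul {φ : ℝ → ℝ} (hφ : AntitoneOn φ (Ioi 0))
    (hφ₀ : ∀ x, 0 < x → 0 ≤ φ x) {β : ℝ}
    (hsum : Summable fun n : ℕ => ((n : ℝ) + 1) ^ β * φ ((n : ℝ) + 1)) :
    Summable fun k : ℕ => ((2 : ℝ) ^ k) ^ (β + 1) * φ (2 ^ k) := by
  set c : ℝ := 2 ^ (-|β|)
  have key := summable_condensed_of_le hsum
    (fun n => mul_nonneg (by positivity) (hφ₀ _ (by positivity)))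
    (g := fun k => c * ((2 : ℝ) ^ (k + 1)) ^ β * φ (2 ^ (k + 1)))
    (fun k => mul_nonneg (by positivity) (hφ₀ _ (by positivity))) fun k n hkn hnk => by
      have h₁ : (2 : ℝ) ^ k ≤ n := by exact_mod_cast hkn
      have h₂ : (n : ℝ) + 1 ≤ 2 ^ (k + 1) := by exact_mod_cast hnk
      have h₃ : (2 : ℝ) ^ (k + 1) ≤ 2 * ((n : ℝ) + 1) := by rw [pow_succ]; linarith
      have hn : (0 : ℝ) < n + 1 := by positivity
      exact mul_le_mul (two_rpow_neg_abs_mul_rpow_le hn h₂ h₃ β)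
        (hφ hn (by simp only [mem_Ioi]; positivity) h₂) (hφ₀ _ (by positivity)) (by positivity)
  refine (summable_nat_add_iff 1).1 ((summable_mul_left_iff (a := c / 2) (by positivity)).1 ?_)
  refine key.congr fun k => ?_
  rw [Real.rpow_add_one (by positivity), pow_succ]
  ring

theorem summable_sq_mul_rpow_of_summable {ψ : ℝ → ℝ} (hψ : AntitoneOn ψ (Ioi 0))
    (hψ₀ : ∀ x, 0 < x → 0 ≤ ψ x) {α : ℝ} (hα : 0 ≤ α)
    (hsum : Summable fun n : ℕ => ((n : ℝ) + 1) ^ (2 * α - 1) * ψ ((n : ℝ) + 1) ^ α) :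
    Summable fun t : ℕ => (((2 : ℝ) ^ t) ^ 2 * ψ (2 ^ t)) ^ α := by
  refine (summable_condensed_rpow_mul (φ := fun x => ψ x ^ α)
    (fun x hx y hy hxy => Real.rpow_le_rpow (hψ₀ y hy) (hψ hx hy hxy) hα)
    (fun x hx => Real.rpow_nonneg (hψ₀ x hx) α) hsum).congr fun t => ?_
  rw [sub_add_cancel, Real.mul_rpow (by positivity) (hψ₀ _ (by positivity)),
    ← Real.rpow_natCast_mul (x := (2 : ℝ) ^ t) (by positivity), Nat.cast_ofNat]

theorem one_div_mul_le_abs_div_sub_div {p p' : ℤ} {q q' : ℕ} (hq : 0 < q) (hq' : 0 < q')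
    (hne : (p : ℝ) / q ≠ p' / q') : 1 / ((q : ℝ) * q') ≤ |(p : ℝ) / q - p' / q'| := by
  have hq₀ : (q : ℝ) ≠ 0 := by positivity
  have hq₀' : (q' : ℝ) ≠ 0 := by positivity
  have hnum : p * q' - q * p' ≠ 0 := fun h => hne <| by
    rw [div_eq_div_iff hq₀ hq₀', mul_comm (p' : ℝ)]
    exact_mod_cast sub_eq_zero.1 h
  have hqq' : (0 : ℝ) < q * q' := by positivity
  rw [div_sub_div _ _ hq₀ hq₀', abs_div, abs_of_pos hqq']
  gcongr
  exact_mod_cast Int.one_le_abs hnum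

theorem measure_le_three_mul_of_forall_inter_ball_le (μ : Measure ℝ) {S : Set ℝ} {δ : ℝ}
    (hδ : 0 < δ) {c : ℝ≥0∞} (h : ∀ y ∈ S, μ (S ∩ ball y δ) ≤ c * μ (ball y δ)) :
    μ S ≤ 3 * c * μ univ := by
  set I : ℤ → Set ℝ := fun j => Ico (j • δ) ((j + 1) • δ)
  have htotal : ∑' j, μ (I j) = μ univ := by
    rw [← measure_iUnion (pairwise_disjoint_Ico_zsmul δ) fun _ => measurableSet_Ico,
      iUnion_Ico_zsmul hδ]
  have hshift (k : ℤ) : ∑' j, μ (I (j + k)) = μ univ :=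
    ((Equiv.addRight k).tsum_eq fun j => μ (I j)).trans htotal
  have hlocal (j : ℤ) : μ (S ∩ I j) ≤ c * (μ (I (j - 1)) + μ (I j) + μ (I (j + 1))) := by
    obtain h₀ | ⟨y, hyS, hyI⟩ := (S ∩ I j).eq_empty_or_nonempty
    · simp [h₀]
    have hIy : I j ⊆ ball y δ := fun z hz => by
      simp only [I, mem_Ico, zsmul_eq_mul, Int.cast_add, Int.cast_one] at hyI hz
      rw [mem_ball, Real.dist_eq, abs_lt]; constructor <;> linarith
    have hyI' : ball y δ ⊆ I (j - 1) ∪ I j ∪ I (j + 1) := fun z hz => by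
      simp only [I, mem_union, mem_Ico, zsmul_eq_mul, Int.cast_add, Int.cast_sub,
        Int.cast_one] at hyI ⊢
      rw [mem_ball, Real.dist_eq, abs_lt] at hz
      by_cases h₁ : z < j * δ
      · left; left; constructor <;> linarith
      by_cases h₂ : z < (j + 1) * δ
      · left; right; constructor <;> linarith
      · right; constructor <;> linarith
    calc μ (S ∩ I j) ≤ μ (S ∩ ball y δ) := measure_mono (inter_subset_inter_right _ hIy)
      _ ≤ c * μ (ball y δ) := h y hyS
      _ ≤ c * (μ (I (j - 1)) + μ (I j) + μ (I (j + 1))) := by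
        grw [hyI', measure_union_le, measure_union_le]
  calc μ S = μ (⋃ j, S ∩ I j) := by rw [← inter_iUnion, iUnion_Ico_zsmul hδ, inter_univ]
    _ ≤ ∑' j, μ (S ∩ I j) := measure_iUnion_le _
    _ ≤ ∑' j, c * (μ (I (j - 1)) + μ (I j) + μ (I (j + 1))) := ENNReal.tsum_le_tsum hlocal
    _ = 3 * c * μ univ := by
      simp only [ENNReal.tsum_mul_left, ENNReal.tsum_add, sub_eq_add_neg, hshift, htotal]
      ring

theorem IsAbsolutelyDecaying1.measure_le_of_forall_inter_ball_subset {K : Set ℝ} {μ : Measure ℝ}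
    {C α r₀ : ℝ} (hdec : IsAbsolutelyDecaying1 K μ C α r₀) {S : Set ℝ} (hSK : S ⊆ K) {r ε : ℝ}
    (hr : 0 < r) (hr₀ : r < r₀) (hε : 0 < ε) (h : ∀ y ∈ S, ∃ a, S ∩ ball y r ⊆ ball a ε) :
    μ S ≤ 3 * ENNReal.ofReal (C * (ε / r) ^ α) * μ univ :=
  measure_le_three_mul_of_forall_inter_ball_le μ hr fun y hy => by
    obtain ⟨a, ha⟩ := h y hy
    calc μ (S ∩ ball y r) ≤ μ (ball y r ∩ ball a ε) :=
          measure_mono (subset_inter inter_subset_right ha)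
      _ ≤ _ := hdec a ε hε y (hSK hy) r hr hr₀

def dyadicApprox (ψ : ℝ → ℝ) (t : ℕ) : Set ℝ :=
  {x | ∃ p : ℤ, ∃ q : ℕ, 2 ^ t ≤ q ∧ q < 2 ^ (t + 1) ∧ |x - p / q| ≤ ψ q}

theorem exists_dyadicApprox_inter_ball_subset_closedBall {ψ : ℝ → ℝ} (hψ : AntitoneOn ψ (Ioi 0))
    {t : ℕ} (hsmall : ((2 : ℝ) ^ t) ^ 2 * ψ (2 ^ t) ≤ 1 / 16) {y : ℝ}
    (hy : y ∈ dyadicApprox ψ t) :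
    ∃ a, dyadicApprox ψ t ∩ ball y (1 / (8 * ((2 : ℝ) ^ t) ^ 2)) ⊆ closedBall a (ψ (2 ^ t)) := by
  set P : ℝ := 2 ^ t
  have hP : 0 < P := by positivity
  have close {x : ℝ} {p : ℤ} {q : ℕ} (hq : 2 ^ t ≤ q) (hx : |x - p / q| ≤ ψ q) :
      |x - p / q| ≤ ψ P := by
    have hPq : P ≤ q := show (2 : ℝ) ^ t ≤ q by exact_mod_cast hq
    exact hx.trans (hψ hP (hP.trans_le hPq) hPq)
  have lt_two_P {q : ℕ} (hq : q < 2 ^ (t + 1)) : (q : ℝ) < 2 * P := by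
    rw [← mul_comm, ← pow_succ]; exact_mod_cast hq
  obtain ⟨p, q, hq₁, hq₂, hyq⟩ := hy
  refine ⟨p / q, fun z ⟨⟨p', q', hq₁', hq₂', hzq⟩, hzy⟩ => ?_⟩
  rw [mem_ball, Real.dist_eq] at hzy
  suffices (p : ℝ) / q = p' / q' by rw [mem_closedBall, Real.dist_eq, this]; exact close hq₁' hzq
  by_contra hne
  have hq₀ : 0 < q := (Nat.two_pow_pos t).trans_le hq₁
  have hq₀' : 0 < q' := (Nat.two_pow_pos t).trans_le hq₁'
  have hsep := one_div_mul_le_abs_div_sub_div hq₀ hq₀' hne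
  have hqq' : (q : ℝ) * q' < 4 * P ^ 2 := by
    nlinarith [lt_two_P hq₂, lt_two_P hq₂', (Nat.cast_pos (α := ℝ)).2 hq₀]
  have : 1 / (4 * P ^ 2) < 1 / ((q : ℝ) * q') := by gcongr
  have : |(p : ℝ) / q - p' / q'| ≤ ψ P + 1 / (8 * P ^ 2) + ψ P := by
    calc |(p : ℝ) / q - p' / q'| = |-(y - p / q) + (y - z) + (z - p' / q')| := by ring_nf
      _ ≤ |y - p / q| + |y - z| + |z - p' / q'| := by
        grw [abs_add_le, abs_add_le, abs_neg]
      _ ≤ ψ P + 1 / (8 * P ^ 2) + ψ P := by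
        grw [close hq₁ hyq, close hq₁' hzq, abs_sub_comm, hzy.le]
  have : ψ P ≤ 1 / (16 * P ^ 2) := by
    rw [le_div_iff₀ (by positivity)]; linarith
  have : 1 / (4 * P ^ 2) = 1 / (16 * P ^ 2) + 1 / (8 * P ^ 2) + 1 / (16 * P ^ 2) := by
    field_simp; norm_num
  linarith

theorem IsAbsolutelyDecaying1.measure_inter_dyadicApprox_le {K : Set ℝ} {μ : Measure ℝ}
    {C α r₀ : ℝ} (hdec : IsAbsolutelyDecaying1 K μ C α r₀) {ψ : ℝ → ℝ}
    (hψ : AntitoneOn ψ (Ioi 0)) {t : ℕ} (hpos : 0 < ψ (2 ^ t))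
    (hsmall : ((2 : ℝ) ^ t) ^ 2 * ψ (2 ^ t) ≤ 1 / 16) (hr₀ : 1 / (8 * ((2 : ℝ) ^ t) ^ 2) < r₀) :
    μ (K ∩ dyadicApprox ψ t) ≤
      3 * ENNReal.ofReal (C * (16 * (((2 : ℝ) ^ t) ^ 2 * ψ (2 ^ t))) ^ α) * μ univ := by
  have hratio : 2 * ψ (2 ^ t) / (1 / (8 * ((2 : ℝ) ^ t) ^ 2)) =
      16 * (((2 : ℝ) ^ t) ^ 2 * ψ (2 ^ t)) := by
    field_simp; ring
  rw [← hratio]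
  refine hdec.measure_le_of_forall_inter_ball_subset inter_subset_left (by positivity) hr₀
    (by positivity) fun y hy => ?_
  obtain ⟨a, ha⟩ := exists_dyadicApprox_inter_ball_subset_closedBall hψ hsmall hy.2
  exact ⟨a, (inter_subset_inter_left _ inter_subset_right).trans
    (ha.trans (closedBall_subset_ball (by linarith)))⟩

theorem finite_setOf_abs_sub_div_le_of_lt {ψ : ℝ → ℝ} (hψ : AntitoneOn ψ (Ioi 0)) (x : ℝ)
    (N : ℕ) :
    {pq : ℤ × ℕ | (0 < pq.2 ∧ |x - (pq.1 : ℝ) / (pq.2 : ℝ)| ≤ ψ (pq.2 : ℝ)) ∧ pq.2 < N}.Finite := by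
  set B : ℤ := ⌈N * (|x| + ψ 1)⌉
  refine ((finite_Icc (-B) B).prod (finite_Iio N)).subset fun ⟨p, q⟩ ⟨⟨hq, hpq⟩, hqN⟩ => ?_
  have hq₁ : (1 : ℝ) ≤ q := by exact_mod_cast hq
  have hqN' : (q : ℝ) ≤ N := by exact_mod_cast hqN.le
  have hψq : ψ q ≤ ψ 1 := hψ (mem_Ioi.2 one_pos) (mem_Ioi.2 (one_pos.trans_le hq₁)) hq₁
  have hp : |(p : ℝ)| ≤ N * (|x| + ψ 1) :=
    calc |(p : ℝ)| = q * |(p : ℝ) / q| := by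
          rw [abs_div, Nat.abs_cast, mul_div_cancel₀ _ (by positivity)]
      _ ≤ N * (|x| + ψ 1) := by
          have := abs_sub_abs_le_abs_sub ((p : ℝ) / q) x
          rw [abs_sub_comm] at this
          gcongr
          linarith [abs_nonneg (x - p / q)]
  refine ⟨abs_le.1 ?_, hqN⟩
  exact_mod_cast hp.trans (Int.le_ceil _)

theorem frequently_mem_dyadicApprox {ψ : ℝ → ℝ} (hψ : AntitoneOn ψ (Ioi 0)) {x : ℝ}
    (hx : x ∈ WellApprox1 ψ) : ∃ᶠ t in atTop, x ∈ dyadicApprox ψ t := by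
  rw [frequently_atTop]
  intro T
  obtain ⟨⟨p, q⟩, ⟨hq, hxq⟩, hqT⟩ : ∃ pq ∈ {pq : ℤ × ℕ | 0 < pq.2 ∧
      |x - (pq.1 : ℝ) / (pq.2 : ℝ)| ≤ ψ (pq.2 : ℝ)}, 2 ^ T ≤ pq.2 := by
    by_contra! h
    exact hx ((finite_setOf_abs_sub_div_le_of_lt hψ x (2 ^ T)).subset fun pq hpq => ⟨hpq, h pq hpq⟩)
  exact ⟨Nat.log 2 q, Nat.le_log_of_pow_le one_lt_two hqT, p, q,
    Nat.pow_log_le_self 2 hq.ne', Nat.lt_pow_succ_log_self one_lt_two q, hxq⟩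

theorem stmt_4_general (K : Set ℝ) (μ : Measure ℝ) [IsFiniteMeasure μ]
    (C α r₀ : ℝ) (hα : 0 < α) (hr₀ : 0 < r₀)
    (hdec : IsAbsolutelyDecaying1 K μ C α r₀)
    (ψ : ℝ → ℝ) (hpos : ∀ r : ℝ, 0 < r → 0 < ψ r)
    (hmono : ∀ x y : ℝ, 0 < x → x ≤ y → ψ y ≤ ψ x)
    (hsum : Summable fun n : ℕ =>
      ((n : ℝ) + 1) ^ (2 * α - 1) * ψ ((n : ℝ) + 1) ^ α) :
    μ (K ∩ WellApprox1 ψ) = 0 := by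
  have hψ : AntitoneOn ψ (Ioi 0) := fun x hx y _ hxy => hmono x y hx hxy
  set u : ℕ → ℝ := fun t => ((2 : ℝ) ^ t) ^ 2 * ψ (2 ^ t)
  have hu₀ (t : ℕ) : 0 ≤ u t := (mul_pos (by positivity) (hpos _ (by positivity))).le
  have hu : Summable fun t => u t ^ α :=
    summable_sq_mul_rpow_of_summable hψ (fun x hx => (hpos x hx).le) hα.le hsum
  have hsmall : ∀ᶠ t in atTop, u t ≤ 1 / 16 ∧ 1 / (8 * ((2 : ℝ) ^ t) ^ 2) < r₀ := by
    have hscale : Tendsto (fun t : ℕ => 1 / (8 * ((2 : ℝ) ^ t) ^ 2)) atTop (𝓝 0) :=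
      tendsto_const_nhds.div_atTop <| ((tendsto_pow_atTop two_ne_zero).comp
        (tendsto_pow_atTop_atTop_of_one_lt one_lt_two)).const_mul_atTop (by norm_num)
    filter_upwards [hu.tendsto_atTop_zero.eventually (gt_mem_nhds (by positivity :
      (0 : ℝ) < (1 / 16) ^ α)), hscale.eventually (gt_mem_nhds hr₀)] with t hut hrt
    exact ⟨((Real.rpow_lt_rpow_iff (hu₀ t) (by norm_num) hα).1 hut).le, hrt⟩
  obtain ⟨T, hT⟩ := eventually_atTop.1 hsmall
  have hbound (t : ℕ) : μ (K ∩ dyadicApprox ψ (t + T)) ≤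
      3 * ENNReal.ofReal (C * 16 ^ α * u (t + T) ^ α) * μ univ := by
    have := hdec.measure_inter_dyadicApprox_le hψ (hpos _ (by positivity))
      (hT (t + T) le_add_self).1 (hT (t + T) le_add_self).2
    rwa [Real.mul_rpow (by norm_num) (hu₀ _), ← mul_assoc] at this
  have hfin : ∑' t, μ (K ∩ dyadicApprox ψ (t + T)) ≠ ∞ := by
    refine ne_top_of_le_ne_top ?_ (ENNReal.tsum_le_tsum hbound)
    have := (((summable_nat_add_iff T).2 hu).mul_left (C * 16 ^ α)).tsum_ofReal_ne_top
    rw [ENNReal.tsum_mul_right, ENNReal.tsum_mul_left]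
    finiteness
  refine measure_mono_null (fun x hx => ?_) (measure_limsup_atTop_eq_zero hfin)
  rw [limsup_nat_add (fun t => K ∩ dyadicApprox ψ t) T, mem_limsup_iff_frequently_mem]
  exact (frequently_mem_dyadicApprox hψ hx.2).mono fun t ht => ⟨hx.1, ht⟩

/-- The d = 1 case without assuming doubling: if μ is absolutely α-decaying and
∑ r^{2α-1} ψ(r)^α < ∞ then μ(K ∩ W(ψ)) = 0. -/
theorem stmt_4 (K : Set ℝ) (hK : IsCompact K) (μ : Measure ℝ) [IsFiniteMeasure μ]
    [NullSingletonClass μ] (hsupp : μ Kᶜ = 0)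
    (C α r₀ : ℝ) (hC : 0 < C) (hα : 0 < α) (hr₀ : 0 < r₀)
    (hdec : IsAbsolutelyDecaying1 K μ C α r₀)
    (ψ : ℝ → ℝ) (hpos : ∀ r : ℝ, 0 < r → 0 < ψ r)
    (hmono : ∀ x y : ℝ, 0 < x → x ≤ y → ψ y ≤ ψ x)
    (hsum : Summable fun n : ℕ =>
      ((n : ℝ) + 1) ^ (2 * α - 1) * ψ ((n : ℝ) + 1) ^ α) :
    μ (K ∩ WellApprox1 ψ) = 0 :=
  stmt_4_general K μ C α r₀ hα hr₀ hdec ψ hpos hmono hsum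
end
end

section
/- Let μ be a measure on ℝ^d supported on a set K satisfying a·r^δ ≤ μ(B(x,r)) ≤ b·r^δ for all x ∈ K and all r < r₀, where δ > d − 1. Then μ is absolutely α-decaying with α := δ − (d−1) > 0: there is a constant C such that for every (d−1)-dimensional hyperplane L, every ε > 0, every x ∈ K, and every r < r₀, μ(B(x,r) ∩ L^(ε)) ≤ C(ε/r)^α μ(B(x,r)). -/
/-!
Cover `B(x,r) ∩ L^(ε) ∩ K` by the balls of radius `ε` around a maximal `ε/2`-separated subset.
The disjoint balls of radius `ε/4` around its points lie in a box of width `≍ ε` in the normal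
direction of `L` and `≍ r` in the `d - 1` others, so comparing volumes bounds their number by
`≍ (r/ε)^(d-1)`. Each ball of radius `ε` centred in `K` has mass at most `b ε^δ`, and
`(r/ε)^(d-1) ε^δ = (ε/r)^(δ-(d-1)) r^δ ≤ (ε/r)^(δ-(d-1)) μ(B(x,r)) / a`.
For `ε > r` the bound is trivial once `C ≥ 1`.
-/

open MeasureTheory Metric Set

noncomputable section

/-- The set of psi-well approximable points in R^d. -/
def WellApprox (d : ℕ) (ψ : ℝ → ℝ) : Set (EuclideanSpace ℝ (Fin d)) :=
  {x | {pq : (Fin d → ℤ) × ℕ | 0 < pq.2 ∧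
      ∀ i, |x i - (pq.1 i : ℝ) / (pq.2 : ℝ)| ≤ ψ (pq.2 : ℝ)}.Infinite}

/-- μ is doubling on K with constant D for radii below r₀. -/
def IsDoubling (d : ℕ) (K : Set (EuclideanSpace ℝ (Fin d)))
    (μ : Measure (EuclideanSpace ℝ (Fin d))) (D r₀ : ℝ) : Prop :=
  ∀ x ∈ K, ∀ r : ℝ, 0 < r → r < r₀ →
    μ (ball x (2 * r)) ≤ ENNReal.ofReal D * μ (ball x r)

/-- μ is absolutely α-decaying on K with constants C, α, r₀. -/
def IsAbsolutelyDecaying (d : ℕ) (K : Set (EuclideanSpace ℝ (Fin d)))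
    (μ : Measure (EuclideanSpace ℝ (Fin d))) (C α r₀ : ℝ) : Prop :=
  ∀ L : AffineSubspace ℝ (EuclideanSpace ℝ (Fin d)),
    (L : Set (EuclideanSpace ℝ (Fin d))).Nonempty →
    Module.finrank ℝ L.direction = d - 1 →
    ∀ ε : ℝ, 0 < ε → ∀ x ∈ K, ∀ r : ℝ, 0 < r → r < r₀ →
      μ (ball x r ∩ Metric.thickening ε (L : Set (EuclideanSpace ℝ (Fin d))))
        ≤ ENNReal.ofReal (C * (ε / r) ^ α) * μ (ball x r)

open Module
open scoped ENNReal NNReal RealInnerProductSpace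

namespace Metric

variable {X : Type*} [PseudoMetricSpace X] {ε : ℝ≥0}

theorem IsSeparated.pairwiseDisjoint_ball {C : Set X} (hC : IsSeparated ε C) :
    C.PairwiseDisjoint fun c ↦ ball c (ε / 2 : ℝ≥0) := by
  intro c hc c' hc' hne
  refine ball_disjoint_ball ?_
  have : (ε : ℝ≥0∞) < edist c c' := hC hc hc' hne
  rw [edist_nndist, ENNReal.coe_lt_coe, ← NNReal.coe_lt_coe, coe_nndist] at this
  push_cast
  linarith

variable [MeasurableSpace X] (μ : Measure X) {A T : Set X} {m : ℝ≥0∞}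

theorem measure_le_coveringNumber_mul (hA : coveringNumber ε A ≠ ⊤)
    (hm : ∀ a ∈ A, μ (closedBall a ε) ≤ m) : μ A ≤ coveringNumber ε A * m := by
  have hcover : A ⊆ ⋃ c ∈ minimalCover ε A, closedBall c ε :=
    isCover_iff_subset_iUnion_closedBall.1 (isCover_minimalCover hA)
  calc μ A ≤ ∑' c : minimalCover ε A, μ (closedBall c ε) :=
        (measure_mono hcover).trans (measure_biUnion_le μ finite_minimalCover.countable _)
    _ ≤ ∑' _ : minimalCover ε A, m :=
        ENNReal.tsum_le_tsum fun c ↦ hm c (minimalCover_subset c.2)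
    _ = coveringNumber ε A * m := by
        rw [ENNReal.tsum_const, ← encard_minimalCover hA, Set.encard]

theorem packingNumber_mul_le_measure [OpensMeasurableSpace X]
    (hT : ∀ a ∈ A, ball a (ε / 2 : ℝ≥0) ⊆ T) (hm : ∀ a ∈ A, m ≤ μ (ball a (ε / 2 : ℝ≥0))) :
    packingNumber ε A * m ≤ μ T := by
  simp only [packingNumber, ENat.toENNReal_iSup, ENNReal.iSup_mul, iSup_le_iff]
  intro C hCA hC
  calc (C.encard : ℝ≥0∞) * m = ∑' _ : C, m := by rw [ENNReal.tsum_const, Set.encard]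
    _ ≤ ∑' c : C, μ (ball c (ε / 2 : ℝ≥0)) := ENNReal.tsum_le_tsum fun c ↦ hm c (hCA c.2)
    _ ≤ μ (⋃ c : C, ball c (ε / 2 : ℝ≥0)) :=
        tsum_meas_le_meas_iUnion_of_disjoint μ (fun _ ↦ measurableSet_ball)
          (hC.pairwiseDisjoint_ball.subtype _ _)
    _ ≤ μ T := measure_mono (iUnion_subset fun c ↦ hT c (hCA c.2))

end Metric

theorem div_rpow_mul_rpow_eq {ε r : ℝ} (hε : 0 < ε) (hr : 0 < r) (s t : ℝ) :
    (r / ε) ^ s * ε ^ t = (ε / r) ^ (t - s) * r ^ t := by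
  rw [Real.div_rpow hr.le hε.le, Real.div_rpow hε.le hr.le, Real.rpow_sub hε, Real.rpow_sub hr]
  field_simp

variable {E : Type*} [NormedAddCommGroup E] [InnerProductSpace ℝ E]

theorem AffineSubspace.exists_unit_mem_orthogonal_direction [FiniteDimensional ℝ E]
    (L : AffineSubspace ℝ E) (hL : finrank ℝ L.direction < finrank ℝ E) :
    ∃ n ∈ L.directionᗮ, ‖n‖ = 1 := by
  have hpos : 0 < finrank ℝ L.directionᗮ := by
    have := L.direction.finrank_add_finrank_orthogonal
    omega
  obtain ⟨⟨v, hv⟩, hv0⟩ := Module.finrank_pos_iff_exists_ne_zero.1 hpos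
  have hv0 : v ≠ 0 := fun h ↦ hv0 (Subtype.ext h)
  exact ⟨‖v‖⁻¹ • v, L.directionᗮ.smul_mem _ hv, norm_smul_inv_norm hv0⟩

theorem AffineSubspace.thickening_subset_abs_inner_sub_lt {L : AffineSubspace ℝ E} {p n : E}
    (hp : p ∈ L) (hn : n ∈ L.directionᗮ) (hn1 : ‖n‖ = 1) (ε : ℝ) :
    thickening ε (L : Set E) ⊆ {y | |⟪n, y - p⟫| < ε} := by
  intro y hy
  obtain ⟨z, hz, hyz⟩ := mem_thickening_iff.1 hy
  have hzp : ⟪n, z - p⟫ = 0 :=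
    Submodule.inner_left_of_mem_orthogonal (L.vsub_mem_direction hz hp) hn
  calc |⟪n, y - p⟫| = |⟪n, y - z⟫| := by
        rw [show y - p = (y - z) + (z - p) by abel, inner_add_right, hzp, add_zero]
    _ ≤ ‖n‖ * ‖y - z‖ := abs_real_inner_le_norm _ _
    _ < ε := by rwa [hn1, one_mul, ← dist_eq_norm]

theorem ball_subset_abs_inner_sub_le_inter_closedBall {n p a x : E} (hn : ‖n‖ = 1)
    {s r ρ : ℝ} (has : |⟪n, a - p⟫| < s) (hax : a ∈ ball x r) :
    ball a ρ ⊆ {y | |⟪n, y - p⟫| ≤ s + ρ} ∩ closedBall x (r + ρ) := by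
  intro y hy
  refine ⟨?_, ball_subset_closedBall (ball_subset_ball' (by linarith [mem_ball.1 hax]) hy)⟩
  rw [mem_ball, dist_eq_norm] at hy
  calc |⟪n, y - p⟫| = |⟪n, y - a⟫ + ⟪n, a - p⟫| := by rw [← inner_add_right, sub_add_sub_cancel]
    _ ≤ |⟪n, y - a⟫| + |⟪n, a - p⟫| := abs_add_le _ _
    _ ≤ ‖y - a‖ + s := add_le_add (by simpa [hn] using abs_real_inner_le_norm n (y - a)) has.le
    _ ≤ s + ρ := by linarith

theorem OrthonormalBasis.exists_apply_eq {ι : Type*} [Fintype ι]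
    [FiniteDimensional ℝ E] (hcard : finrank ℝ E = Fintype.card ι) (i₀ : ι) {n : E}
    (hn : ‖n‖ = 1) : ∃ b : OrthonormalBasis ι ℝ E, b i₀ = n := by
  have horth : Orthonormal ℝ (({i₀} : Set ι).domRestrict fun _ ↦ n) :=
    ⟨fun _ ↦ hn, fun i j hij ↦ (hij (Subtype.ext (i.2.trans j.2.symm))).elim⟩
  obtain ⟨b, hb⟩ := horth.exists_orthonormalBasis_extension_of_card_eq hcard
  exact ⟨b, hb i₀ rfl⟩

theorem volume_abs_inner_sub_le_inter_closedBall_le [FiniteDimensional ℝ E] [MeasurableSpace E]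
    [BorelSpace E] {n : E} (hn : ‖n‖ = 1) (p x : E) (s R : ℝ) :
    volume ({y | |⟪n, y - p⟫| ≤ s} ∩ closedBall x R) ≤
      ENNReal.ofReal (2 * s) * ENNReal.ofReal (2 * R) ^ (finrank ℝ E - 1) := by
  classical
  have : Nontrivial E := nontrivial_of_ne n 0 (by rintro rfl; simp at hn)
  set k := finrank ℝ E
  let i₀ : Fin k := ⟨0, finrank_pos⟩
  obtain ⟨b, hb⟩ := OrthonormalBasis.exists_apply_eq (Fintype.card_fin k).symm i₀ hn
  let c : Fin k → ℝ := Function.update (fun i ↦ b.repr x i) i₀ ⟪n, p⟫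
  let w : Fin k → ℝ := Function.update (fun _ ↦ R) i₀ s
  have hbox : {y | |⟪n, y - p⟫| ≤ s} ∩ closedBall x R ⊆
      (fun y ↦ (b.repr y).ofLp) ⁻¹' univ.pi fun i ↦ closedBall (c i) (w i) := by
    rintro y ⟨hys, hyx⟩ i -
    rw [mem_closedBall, Real.dist_eq]
    by_cases hi : i = i₀
    · subst hi
      simpa [c, w, b.repr_apply_apply, hb, inner_sub_right] using hys
    · simp only [c, w, Function.update_of_ne hi, b.repr_apply_apply,
        ← inner_sub_right]
      calc |⟪b i, y - x⟫| ≤ ‖b i‖ * ‖y - x‖ := abs_real_inner_le_norm _ _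
        _ ≤ R := by rwa [b.orthonormal.1 i, one_mul, ← dist_eq_norm, ← mem_closedBall]
  have hpres : MeasurePreserving (fun y ↦ (b.repr y).ofLp) :=
    (PiLp.volume_preserving_ofLp (Fin k)).comp b.measurePreserving_repr
  calc volume ({y | |⟪n, y - p⟫| ≤ s} ∩ closedBall x R)
      ≤ volume (univ.pi fun i ↦ closedBall (c i) (w i)) := by
        rw [← hpres.measure_preimage
          (MeasurableSet.univ_pi fun _ ↦ measurableSet_closedBall).nullMeasurableSet]
        exact measure_mono hbox
    _ = ENNReal.ofReal (2 * s) * ENNReal.ofReal (2 * R) ^ (k - 1) := by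
        have hw : (fun i ↦ ENNReal.ofReal (2 * w i)) =
            Function.update (fun _ ↦ ENNReal.ofReal (2 * R)) i₀ (ENNReal.ofReal (2 * s)) := by
          ext i; by_cases hi : i = i₀ <;> simp [w, hi]
        simp only [volume_pi_pi, Real.volume_closedBall]
        rw [hw, Finset.prod_update_of_mem (Finset.mem_univ _), Finset.prod_const,
          Finset.card_sdiff_of_subset (by simp), Finset.card_univ, Fintype.card_fin,
          Finset.card_singleton]

theorem packingNumber_le_of_subset_ball_inter_thickening [FiniteDimensional ℝ E]
    [MeasurableSpace E] [BorelSpace E] {L : AffineSubspace ℝ E}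
    (hL : finrank ℝ L.direction < finrank ℝ E) {p : E} (hp : p ∈ L) {x : E} {ε r : ℝ}
    (hε : 0 < ε) (hεr : ε ≤ r) {A : Set E} (hA : A ⊆ ball x r ∩ thickening ε L) :
    (packingNumber (ε / 2).toNNReal A : ℝ≥0∞) ≤ ENNReal.ofReal
      (10 ^ finrank ℝ E * (r / ε) ^ (finrank ℝ E - 1) / (volume (ball (0 : E) 1)).toReal) := by
  obtain ⟨n, hnL, hn⟩ := L.exists_unit_mem_orthogonal_direction hL
  set k := finrank ℝ E
  set V := volume (ball (0 : E) 1)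
  have hr : 0 < r := hε.trans_le hεr
  have hV : 0 < V.toReal :=
    ENNReal.toReal_pos (measure_ball_pos _ _ one_pos).ne' measure_ball_lt_top.ne
  have hρ : (((ε / 2).toNNReal / 2 : ℝ≥0) : ℝ) = ε / 4 := by
    rw [NNReal.coe_div, Real.coe_toNNReal _ (by positivity)]; push_cast; ring
  set T := {y | |⟪n, y - p⟫| ≤ ε + ε / 4} ∩ closedBall x (5 * r / 4)
  have hT : ∀ a ∈ A, ball a (((ε / 2).toNNReal / 2 : ℝ≥0) : ℝ) ⊆ T := by
    intro a ha
    obtain ⟨hax, haL⟩ := hA ha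
    rw [hρ]
    refine (ball_subset_abs_inner_sub_le_inter_closedBall hn
      (L.thickening_subset_abs_inner_sub_lt hp hnL hn ε haL) hax).trans ?_
    exact inter_subset_inter_right _ (closedBall_subset_closedBall (by linarith))
  have hcount := packingNumber_mul_le_measure volume hT fun a _ ↦ le_of_eq
    (Measure.addHaar_ball_of_pos volume a (by rw [hρ]; positivity)).symm
  have hvolT := volume_abs_inner_sub_le_inter_closedBall_le hn p x (ε + ε / 4) (5 * r / 4)
  obtain ⟨j, hj⟩ : ∃ j, k = j + 1 := Nat.exists_eq_add_one.2 (hL.trans_le' (Nat.zero_le _))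
  rw [hρ, ← ENNReal.ofReal_toReal measure_ball_lt_top.ne, ← ENNReal.ofReal_mul (by positivity)]
    at hcount
  rw [← ENNReal.ofReal_pow (by positivity), ← ENNReal.ofReal_mul (by positivity)] at hvolT
  have hW : 0 < (ε / 4) ^ k * V.toReal := by positivity
  calc (packingNumber (ε / 2).toNNReal A : ℝ≥0∞)
      ≤ ENNReal.ofReal (2 * (ε + ε / 4) * (2 * (5 * r / 4)) ^ (k - 1)) /
          ENNReal.ofReal ((ε / 4) ^ k * V.toReal) :=
        ENNReal.le_div_iff_mul_le (by simp [hW]) (by simp) |>.2 (hcount.trans hvolT)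
    _ = _ := by
        rw [← ENNReal.ofReal_div_of_pos hW]
        congr 1
        have h10 : (10 : ℝ) ^ j = 2 ^ j * 5 ^ j := by rw [← mul_pow]; norm_num
        have h4 : (4 : ℝ) ^ j = 2 ^ j * 2 ^ j := by rw [← mul_pow]; norm_num
        rw [hj, Nat.add_sub_cancel, div_eq_div_iff (by positivity) (by positivity)]
        simp only [div_pow, mul_pow, pow_succ, h10, h4]
        field_simp
        ring

theorem measure_ball_inter_thickening_le [FiniteDimensional ℝ E] [MeasurableSpace E]
    [BorelSpace E] {μ : Measure E} {K : Set E} (hK : μ Kᶜ = 0) {L : AffineSubspace ℝ E}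
    (hLne : (L : Set E).Nonempty) (hL : finrank ℝ L.direction < finrank ℝ E) (x : E)
    {ε r m : ℝ} (hε : 0 < ε) (hεr : ε ≤ r) (hm : ∀ y ∈ K, μ (ball y ε) ≤ ENNReal.ofReal m) :
    μ (ball x r ∩ thickening ε L) ≤ ENNReal.ofReal
      (10 ^ finrank ℝ E * (r / ε) ^ (finrank ℝ E - 1) / (volume (ball (0 : E) 1)).toReal * m) := by
  obtain ⟨p, hp⟩ := hLne
  set N := 10 ^ finrank ℝ E * (r / ε) ^ (finrank ℝ E - 1) / (volume (ball (0 : E) 1)).toReal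
  set A := ball x r ∩ thickening ε L ∩ K
  set ρ := (ε / 2).toNNReal
  have hcov : (coveringNumber ρ A : ℝ≥0∞) ≤ ENNReal.ofReal N :=
    (ENat.toENNReal_le.2 (coveringNumber_le_packingNumber ρ A)).trans
      (packingNumber_le_of_subset_ball_inter_thickening hL hp hε hεr inter_subset_left)
  have hcov_ne_top : coveringNumber ρ A ≠ ⊤ :=
    ENat.toENNReal_ne_top.1 (hcov.trans_lt ENNReal.ofReal_lt_top).ne
  have hρ : (ρ : ℝ) < ε := by rw [Real.coe_toNNReal _ (by positivity)]; linarith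
  have hN : 0 ≤ N := by have := hε.trans_le hεr; positivity
  calc μ (ball x r ∩ thickening ε L) = μ A := (measure_inter_conull hK).symm
    _ ≤ coveringNumber ρ A * ENNReal.ofReal m :=
        measure_le_coveringNumber_mul μ hcov_ne_top fun a ha ↦
          (measure_mono (closedBall_subset_ball hρ)).trans (hm a ha.2)
    _ ≤ ENNReal.ofReal N * ENNReal.ofReal m := by gcongr
    _ = ENNReal.ofReal (N * m) := (ENNReal.ofReal_mul hN).symm

theorem measure_ball_inter_thickening_le_rpow [FiniteDimensional ℝ E] [MeasurableSpace E]
    [BorelSpace E] {μ : Measure E} {K : Set E} (hK : μ Kᶜ = 0) {L : AffineSubspace ℝ E}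
    (hLne : (L : Set E).Nonempty) (hL : finrank ℝ L.direction < finrank ℝ E) (x : E)
    {ε r b δ : ℝ} (hε : 0 < ε) (hεr : ε ≤ r)
    (hm : ∀ y ∈ K, μ (ball y ε) ≤ ENNReal.ofReal (b * ε ^ δ)) :
    μ (ball x r ∩ thickening ε L) ≤ ENNReal.ofReal (10 ^ finrank ℝ E * b /
      (volume (ball (0 : E) 1)).toReal * (ε / r) ^ (δ - ((finrank ℝ E : ℝ) - 1)) * r ^ δ) := by
  refine (measure_ball_inter_thickening_le hK hLne hL x hε hεr hm).trans_eq (congrArg _ ?_)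
  rw [← Real.rpow_natCast (r / ε), Nat.cast_sub (Nat.one_le_of_lt hL), Nat.cast_one]
  linear_combination (10 ^ finrank ℝ E * b / (volume (ball (0 : E) 1)).toReal) *
    div_rpow_mul_rpow_eq hε (hε.trans_le hεr) ((finrank ℝ E : ℝ) - 1) δ

theorem stmt_8_general (d : ℕ) (hd : 0 < d) (K : Set (EuclideanSpace ℝ (Fin d)))
    (μ : Measure (EuclideanSpace ℝ (Fin d))) (hsupp : μ Kᶜ = 0)
    (a b δ r₀ : ℝ) (ha : 0 < a) (hb : 0 < b)
    (hδ : (d : ℝ) - 1 < δ)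
    (hmeas : ∀ x ∈ K, ∀ r : ℝ, 0 < r → r < r₀ →
      ENNReal.ofReal (a * r ^ δ) ≤ μ (ball x r) ∧
        μ (ball x r) ≤ ENNReal.ofReal (b * r ^ δ)) :
    ∃ C : ℝ, 0 < C ∧ IsAbsolutelyDecaying d K μ C (δ - ((d : ℝ) - 1)) r₀ := by
  set V := (volume (ball (0 : EuclideanSpace ℝ (Fin d)) 1)).toReal with hVdef
  have hV : 0 < V :=
    ENNReal.toReal_pos (measure_ball_pos _ _ one_pos).ne' measure_ball_lt_top.ne
  set C := max 1 (10 ^ d * b / (a * V))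
  refine ⟨C, zero_lt_one.trans_le (le_max_left _ _), ?_⟩
  intro L hLne hLdim ε hε x hx r hr hrr₀
  have hα : 0 < δ - ((d : ℝ) - 1) := by linarith
  rcases le_or_gt ε r with hεr | hrε
  · have hdim : finrank ℝ L.direction < finrank ℝ (EuclideanSpace ℝ (Fin d)) := by
      rw [hLdim, finrank_euclideanSpace_fin]; omega
    have hcount := measure_ball_inter_thickening_le_rpow hsupp hLne hdim x hε hεr
      fun y hy ↦ (hmeas y hy ε hε (hεr.trans_lt hrr₀)).2
    rw [finrank_euclideanSpace_fin, ← hVdef] at hcount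
    calc μ (ball x r ∩ thickening ε L)
        ≤ ENNReal.ofReal (10 ^ d * b / (a * V) * (ε / r) ^ (δ - ((d : ℝ) - 1)) * (a * r ^ δ)) :=
          hcount.trans_eq (congrArg _ (by field_simp))
      _ ≤ ENNReal.ofReal (C * (ε / r) ^ (δ - ((d : ℝ) - 1))) * ENNReal.ofReal (a * r ^ δ) := by
          rw [← ENNReal.ofReal_mul (by positivity)]
          gcongr
          exact le_max_right _ _
      _ ≤ ENNReal.ofReal (C * (ε / r) ^ (δ - ((d : ℝ) - 1))) * μ (ball x r) := by
          gcongr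
          exact (hmeas x hx r hr hrr₀).1
  · refine (measure_mono inter_subset_left).trans (le_mul_of_one_le_left' ?_)
    exact ENNReal.one_le_ofReal.2 <| one_le_mul_of_one_le_of_one_le (le_max_left _ _)
      (Real.one_le_rpow ((one_le_div hr).2 hrε.le) hα.le)

/-- If a r^δ ≤ μ(B(x,r)) ≤ b r^δ with δ > d - 1, then μ is absolutely
α-decaying with α = δ - (d-1). -/
theorem stmt_8 (d : ℕ) (hd : 0 < d) (K : Set (EuclideanSpace ℝ (Fin d)))
    (μ : Measure (EuclideanSpace ℝ (Fin d))) (hsupp : μ Kᶜ = 0)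
    (a b δ r₀ : ℝ) (ha : 0 < a) (hb : 0 < b) (hr₀ : 0 < r₀)
    (hδ : (d : ℝ) - 1 < δ)
    (hmeas : ∀ x ∈ K, ∀ r : ℝ, 0 < r → r < r₀ →
      ENNReal.ofReal (a * r ^ δ) ≤ μ (ball x r) ∧
        μ (ball x r) ≤ ENNReal.ofReal (b * r ^ δ)) :
    ∃ C : ℝ, 0 < C ∧ IsAbsolutelyDecaying d K μ C (δ - ((d : ℝ) - 1)) r₀ :=
  stmt_8_general d hd K μ hsupp a b δ r₀ ha hb hδ hmeas
end
end
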